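/- arXiv:2009.02323 — 2 statements merged into one kernel-verified Lean document; each statement's English description precedes it below -/
import Mathlib

section
/- For every integer d ≥ 2 and every ε ∈ (0,1) there exists a constant C > 0 (depending only on d and ε) such that for all (ℓ,m) ∈ I_d with 0 < m ≤ εℓ and all x ∈ (−1,1) with (1−x²)^{1/2} ≤ b_{ℓ,m}/(2e), one has |X̃^d_{ℓ,m}(x)| ≤ C 2^{−m} ℓ^{(d−1)/2}. -/
/-!
Rodrigues' formula and the Leibniz rule for `(1 - t)^β (1 + t)^β`, `β = α + j`, bound
`2^j j! |P_j^{(α,α)}(x)|` by `∑ₖ C(j,k) (β)ₖ (β)_{j-k} (1 - x)^{j-k} (1 + x)^k` with falling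
factorials `(β)ₖ`. For `x ≥ 0` the `k`-th term is at most `2^j (β)_j q^{j-k} / (j-k)!`, where
`q = β² (1 - x²) / (2α)`, so `|P_j^{(α,α)}(x)| ≤ P_j^{(α,α)}(1) exp q` with
`P_j^{(α,α)}(1) = Γ(α + j + 1) / (Γ(α + 1) j!)`; evenness covers `x < 0`.
Pairing the factors of `Γ(ℓ + m + 1/2) / Γ(ℓ - m + 1/2)` around their mean `ℓ` bounds that ratio
by `ℓ^{2m}`, which controls `c_{ℓm}`. On the region `√(1 - x²) ≤ m / (2eℓ)` we get
`q ≤ m / (8e²) ≤ m log 2`, and the remaining factor `(ℓ √(1 - x²))^m / Γ(m + 1)` is at most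
`(m / 2e)^m / Γ(m + 1) ≤ 2^{-m}` because `Γ(t + 1) ≥ (t / e)^t` at half-integers, by induction
from `(1 + 1/t)^t ≤ e`.
-/

open Real Set

/-- Jacobi polynomial `P_j^{(α,α)}` via Rodrigues' formula. -/
noncomputable def jacobiP (j : ℕ) (α : ℝ) (x : ℝ) : ℝ :=
  ((-1 : ℝ) ^ j / (2 ^ j * (Nat.factorial j : ℝ))) * (1 - x ^ 2) ^ (-α) *
    iteratedDeriv j (fun t : ℝ => (1 - t ^ 2) ^ (α + (j : ℝ))) x

/-- The normalization constant `c_{ℓm}`. -/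
noncomputable def cConst (ℓ m : ℝ) : ℝ :=
  Real.sqrt (ℓ * Real.Gamma (ℓ - m + 1/2) * Real.Gamma (ℓ + m + 1/2)) /
    ((2 : ℝ) ^ m * Real.Gamma (ℓ + 1/2))

/-- The function `Y_{ℓ,m}`. -/
noncomputable def Yfun (ℓ m x : ℝ) : ℝ :=
  cConst ℓ m * (1 - x ^ 2) ^ (m / 2) * jacobiP ⌊ℓ - m - 1/2⌋₊ m x

/-- Membership in the index set `I = {(ℓ,m) ∈ (ℕ/2)² : ℓ - m - 1/2 ∈ ℕ}`. -/
def memI (ℓ m : ℝ) : Prop :=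
  (∃ n : ℕ, m = (n : ℝ) / 2) ∧ (∃ j : ℕ, ℓ - m - 1/2 = (j : ℝ))

/-- `b_{ℓ,m} = m / ℓ`. -/
noncomputable def bPt (ℓ m : ℝ) : ℝ := m / ℓ

/-- `a_{ℓ,m} = (1 - b_{ℓ,m}²)^{1/2}`. -/
noncomputable def aPt (ℓ m : ℝ) : ℝ := Real.sqrt (1 - bPt ℓ m ^ 2)

/-- Membership in `ℕ_k = ℕ + (k-1)/2`. -/
def memNk (k : ℕ) (t : ℝ) : Prop := ∃ n : ℕ, t = (n : ℝ) + ((k : ℝ) - 1) / 2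

/-- Membership in `I_d`. -/
def memId (d : ℕ) (ℓ m : ℝ) : Prop := memNk d ℓ ∧ memNk (d - 1) m ∧ m ≤ ℓ

/-- The function `X̃^d_{ℓ,m}`. -/
noncomputable def Xtilde (d : ℕ) (ℓ m x : ℝ) : ℝ :=
  (1 - x ^ 2) ^ (-((d : ℝ) - 2) / 4) * Yfun ℓ m x

section Pochhammer

variable {S : Type*} [Field S] [LinearOrder S] [IsStrictOrderedRing S]

theorem descPochhammer_eval_le_pow {n : ℕ} {s : S} (hs : (n : S) - 1 ≤ s) :
    (descPochhammer S n).eval s ≤ s ^ n := by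
  induction n with
  | zero => simp
  | succ n ih =>
    push_cast at hs
    have hn : (0 : S) ≤ n := Nat.cast_nonneg n
    rw [descPochhammer_succ_eval, pow_succ]
    exact mul_le_mul (ih (by linarith)) (by linarith) (by linarith)
      (pow_nonneg (by linarith) n)

theorem descPochhammer_eval_mul_pow_le {k n : ℕ} {s : S} (hkn : k ≤ n) (hs : (n : S) - 1 ≤ s) :
    (descPochhammer S k).eval s * (s - n + 1) ^ (n - k) ≤ (descPochhammer S n).eval s := by
  have hk : (k : S) ≤ n := by exact_mod_cast hkn
  have hsplit := congrArg (Polynomial.eval s) (descPochhammer_mul (R := S) k (n - k))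
  rw [Nat.add_sub_cancel' hkn, Polynomial.eval_mul, Polynomial.eval_comp] at hsplit
  simp only [Polynomial.eval_sub, Polynomial.eval_X, Polynomial.eval_natCast] at hsplit
  rw [← hsplit]
  refine mul_le_mul_of_nonneg_left ?_ (descPochhammer_nonneg (by linarith))
  convert pow_le_descPochhammer_eval (S := S) (n := n - k) (s := s - k) ?_ using 2
  · push_cast [Nat.cast_sub hkn]; ring
  · push_cast [Nat.cast_sub hkn]; linarith

theorem descPochhammer_eval_le_mean_pow {n : ℕ} {s : S} (hs : (n : S) - 1 ≤ s) :
    (descPochhammer S n).eval s ≤ (s - (n - 1) / 2) ^ n := by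
  induction n using Nat.strong_induction_on generalizing s with
  | _ n ih =>
  match n with
  | 0 => simp
  | 1 => simp
  | n + 2 =>
    push_cast at hs ⊢
    have hn : (0 : S) ≤ n := Nat.cast_nonneg n
    have hpeel : (descPochhammer S (n + 2)).eval s =
        s * (s - 1 - n) * (descPochhammer S n).eval (s - 1) := by
      rw [descPochhammer_succ_left, Polynomial.eval_mul, Polynomial.eval_X, Polynomial.eval_comp,
        descPochhammer_succ_eval]
      simp only [Polynomial.eval_sub, Polynomial.eval_X, Polynomial.eval_one]
      ring
    have hmean : s - (n + 2 - 1) / 2 = s - 1 - (n - 1) / 2 := by ring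
    rw [hpeel, hmean, pow_succ', pow_succ', ← mul_assoc]
    -- AM-GM for the outer pair of factors `s` and `s - 1 - n`
    refine mul_le_mul ?_ (ih n (by omega) (by linarith)) (descPochhammer_nonneg (by linarith))
      (mul_self_nonneg _)
    nlinarith [sq_nonneg ((n : S) + 1)]

end Pochhammer

theorem Real.Gamma_add_one_eq_descPochhammer_eval_mul {s : ℝ} {n : ℕ} (hs : 0 < s - n + 1) :
    Real.Gamma (s + 1) = (descPochhammer ℝ n).eval s * Real.Gamma (s - n + 1) := by
  induction n with
  | zero => simp
  | succ n ih =>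
    push_cast at hs
    rw [ih (by linarith), descPochhammer_succ_eval, mul_assoc,
      show s - n + 1 = (s - (n + 1 : ℕ) + 1) + 1 by push_cast; ring,
      Real.Gamma_add_one (by push_cast; linarith)]
    push_cast; ring

theorem Real.add_one_rpow_self_le {t : ℝ} (ht : 0 ≤ t) : (t + 1) ^ t ≤ exp 1 * t ^ t := by
  rcases ht.eq_or_lt with rfl | ht
  · simp [(one_lt_exp_iff.mpr one_pos).le]
  have hbase : t + 1 ≤ t * exp (1 / t) := by
    have := add_one_le_exp (1 / t)
    calc t + 1 = t * (1 / t + 1) := by field_simp; ring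
      _ ≤ t * exp (1 / t) := by gcongr
  calc (t + 1) ^ t ≤ (t * exp (1 / t)) ^ t := by gcongr
    _ = exp 1 * t ^ t := by
      rw [mul_rpow ht.le (exp_pos _).le, ← exp_mul, one_div_mul_cancel ht.ne', mul_comm]

theorem Real.div_exp_one_rpow_le_Gamma_add_one {t : ℝ} {M : ℕ} (hM : (M : ℝ) = 2 * t) :
    (t / exp 1) ^ t ≤ Gamma (t + 1) := by
  induction M using Nat.strong_induction_on generalizing t with
  | _ M ih =>
  match M with
  | 0 =>
    obtain rfl : t = 0 := by simp at hM; linarith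
    simp
  | 1 =>
    obtain rfl : t = 1 / 2 := by simp at hM; linarith
    rw [Gamma_add_one (by norm_num),
      Gamma_one_half_eq, ← sqrt_eq_rpow, show 1 / 2 * √π = √(π / 4) by
        rw [sqrt_div' _ (by norm_num : (0 : ℝ) ≤ 4), show (4 : ℝ) = 2 ^ 2 by norm_num,
          sqrt_sq (by norm_num)]; ring]
    refine sqrt_le_sqrt ?_
    rw [div_div, div_le_div_iff₀ (by positivity) (by norm_num)]
    nlinarith [pi_gt_three, exp_one_gt_d9]
  | M + 2 =>
    obtain ⟨u, rfl⟩ : ∃ u, t = u + 1 := ⟨t - 1, by ring⟩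
    push_cast at hM
    have hu : 0 ≤ u := by have := (M.cast_nonneg : (0 : ℝ) ≤ M); linarith
    have hprev := ih M (by omega) (t := u) (by linarith)
    have he := exp_pos 1
    rw [Gamma_add_one (by linarith)]
    calc ((u + 1) / exp 1) ^ (u + 1) = (u + 1) ^ u / exp 1 ^ u * (u + 1) / exp 1 := by
          rw [rpow_add_one (by positivity), div_rpow (by linarith) he.le]; ring
      _ ≤ exp 1 * u ^ u / exp 1 ^ u * (u + 1) / exp 1 := by
          gcongr; exact add_one_rpow_self_le hu
      _ = (u + 1) * (u / exp 1) ^ u := by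
          rw [div_rpow hu he.le]; field_simp
      _ ≤ (u + 1) * Gamma (u + 1) := by gcongr

theorem iteratedDeriv_one_sub_rpow (β : ℝ) (k : ℕ) (t : ℝ) :
    iteratedDeriv k (fun s : ℝ => (1 - s) ^ β) t =
      (-1) ^ k * (descPochhammer ℝ k).eval β * (1 - t) ^ (β - k) := by
  simp only [iteratedDeriv_comp_const_sub k (fun s : ℝ => s ^ β) 1, iteratedDeriv_eq_iterate,
    iter_deriv_rpow_const, smul_eq_mul, mul_assoc]

theorem iteratedDeriv_one_add_rpow (β : ℝ) (k : ℕ) (t : ℝ) :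
    iteratedDeriv k (fun s : ℝ => (1 + s) ^ β) t =
      (descPochhammer ℝ k).eval β * (1 + t) ^ (β - k) := by
  simp only [iteratedDeriv_comp_const_add k (fun s : ℝ => s ^ β) 1, iteratedDeriv_eq_iterate,
    iter_deriv_rpow_const]

theorem iteratedDeriv_one_sub_sq_rpow (β : ℝ) (j : ℕ) {x : ℝ} (hx : x ∈ Ioo (-1 : ℝ) 1) :
    iteratedDeriv j (fun t : ℝ => (1 - t ^ 2) ^ β) x =
      ∑ k ∈ Finset.range (j + 1), j.choose k *
        ((-1) ^ k * (descPochhammer ℝ k).eval β * (1 - x) ^ (β - k)) *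
        ((descPochhammer ℝ (j - k)).eval β * (1 + x) ^ (β - (j - k : ℕ))) := by
  have hfactor : (fun t : ℝ => (1 - t ^ 2) ^ β) =ᶠ[nhds x]
      (fun s : ℝ => (1 - s) ^ β) * (fun s : ℝ => (1 + s) ^ β) := by
    filter_upwards [Ioo_mem_nhds hx.1 hx.2] with t ht
    rw [Pi.mul_apply, ← mul_rpow (by linarith [ht.2]) (by linarith [ht.1])]
    ring_nf
  have hsub : ContDiffAt ℝ j (fun s : ℝ => (1 - s) ^ β) x :=
    (contDiffAt_rpow_const_of_ne (by linarith [hx.2])).comp x (contDiffAt_const.sub contDiffAt_id)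
  have hadd : ContDiffAt ℝ j (fun s : ℝ => (1 + s) ^ β) x :=
    (contDiffAt_rpow_const_of_ne (by linarith [hx.1])).comp x (contDiffAt_const.add contDiffAt_id)
  rw [hfactor.iteratedDeriv_eq, iteratedDeriv_mul hsub hadd]
  simp only [iteratedDeriv_one_sub_rpow, iteratedDeriv_one_add_rpow]

theorem one_sub_sq_rpow_neg_mul_abs_iteratedDeriv_le {α : ℝ} (hα : -1 < α) (j : ℕ) {x : ℝ}
    (hx : x ∈ Ioo (-1 : ℝ) 1) :
    (1 - x ^ 2) ^ (-α) * |iteratedDeriv j (fun t : ℝ => (1 - t ^ 2) ^ (α + j)) x| ≤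
      ∑ k ∈ Finset.range (j + 1), j.choose k * (descPochhammer ℝ k).eval (α + j) *
        (descPochhammer ℝ (j - k)).eval (α + j) * (1 - x) ^ (j - k) * (1 + x) ^ k := by
  have hA : 0 < 1 - x := by linarith [hx.2]
  have hB : 0 < 1 + x := by linarith [hx.1]
  rw [iteratedDeriv_one_sub_sq_rpow _ _ hx]
  refine (mul_le_mul_of_nonneg_left (Finset.abs_sum_le_sum_abs _ _)
    (rpow_nonneg (by nlinarith) _)).trans_eq ?_
  rw [Finset.mul_sum]
  refine Finset.sum_congr rfl fun k hk => ?_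
  have hkj : k ≤ j := Nat.lt_succ_iff.mp (Finset.mem_range.mp hk)
  have hpos : ∀ i ≤ j, 0 ≤ (descPochhammer ℝ i).eval (α + j) := fun i hi =>
    descPochhammer_nonneg (by linarith [(Nat.cast_le (α := ℝ)).mpr hi])
  have hsplit : (1 - x ^ 2) ^ (-α) = (1 - x) ^ (-α) * (1 + x) ^ (-α) := by
    rw [← mul_rpow hA.le hB.le]; ring_nf
  have hsub : (1 - x) ^ (-α) * (1 - x) ^ (α + j - k) = (1 - x) ^ (j - k) := by
    rw [← rpow_add hA, ← rpow_natCast, Nat.cast_sub hkj]; ring_nf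
  have hadd : (1 + x) ^ (-α) * (1 + x) ^ (α + j - (j - k : ℕ)) = (1 + x) ^ k := by
    rw [← rpow_add hB, ← rpow_natCast, Nat.cast_sub hkj]; ring_nf
  rw [abs_mul, abs_mul, abs_mul, abs_mul, abs_mul, abs_pow, abs_neg, abs_one, one_pow,
    Nat.abs_cast, abs_of_nonneg (hpos k hkj), abs_of_nonneg (hpos _ (Nat.sub_le j k)),
    abs_of_pos (rpow_pos_of_pos hA _), abs_of_pos (rpow_pos_of_pos hB _), hsplit,
    ← hsub, ← hadd]
  ring

theorem choose_mul_descPochhammer_mul_le {α : ℝ} (hα : 0 < α) {j k : ℕ} (hkj : k ≤ j) {x : ℝ}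
    (hx0 : 0 ≤ x) (hx1 : x ≤ 1) :
    j.choose k * (descPochhammer ℝ k).eval (α + j) * (descPochhammer ℝ (j - k)).eval (α + j) *
        (1 - x) ^ (j - k) * (1 + x) ^ k ≤
      2 ^ j * (descPochhammer ℝ j).eval (α + j) *
        (((α + j) ^ 2 * (1 - x ^ 2) / (2 * α)) ^ (j - k) / (j - k).factorial) := by
  set β := α + j
  have hk : (k : ℝ) ≤ j := by exact_mod_cast hkj
  have hjβ : (j : ℝ) ≤ β := by linarith
  have hy : 0 ≤ 1 - x ^ 2 := by nlinarith
  have hpk : 0 ≤ (descPochhammer ℝ k).eval β := descPochhammer_nonneg (by linarith)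
  have hpr : 0 ≤ (descPochhammer ℝ (j - k)).eval β :=
    descPochhammer_nonneg (by push_cast [Nat.cast_sub hkj]; linarith)
  have hpj : 0 ≤ (descPochhammer ℝ j).eval β := descPochhammer_nonneg (by linarith)
  have hchoose : (j.choose k : ℝ) ≤ β ^ (j - k) / (j - k).factorial := by
    rw [← Nat.choose_symm hkj]
    exact (Nat.choose_le_pow_div _ _).trans (by gcongr)
  have hlow : (descPochhammer ℝ k).eval β ≤ (descPochhammer ℝ j).eval β / α ^ (j - k) := by
    rw [le_div_iff₀ (by positivity)]
    refine le_trans ?_ (descPochhammer_eval_mul_pow_le hkj (by linarith))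
    gcongr
    linarith
  have hhigh : (descPochhammer ℝ (j - k)).eval β ≤ β ^ (j - k) :=
    descPochhammer_eval_le_pow (by push_cast [Nat.cast_sub hkj]; linarith)
  have hleft : (1 - x) ^ (j - k) ≤ (1 - x ^ 2) ^ (j - k) := by gcongr; nlinarith
  have hright : (1 + x) ^ k ≤ 2 ^ k := by gcongr; linarith
  calc _ ≤ β ^ (j - k) / (j - k).factorial * ((descPochhammer ℝ j).eval β / α ^ (j - k)) *
        β ^ (j - k) * (1 - x ^ 2) ^ (j - k) * 2 ^ k := by gcongr
    _ = _ := by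
        rw [show (2 : ℝ) ^ j = 2 ^ k * 2 ^ (j - k) by rw [← pow_add, Nat.add_sub_cancel' hkj]]
        simp only [div_pow, mul_pow]
        field_simp
        rw [pow_right_comm β 2]
        ring

theorem sum_choose_descPochhammer_mul_le {α : ℝ} (hα : 0 < α) (j : ℕ) {x : ℝ} (hx0 : 0 ≤ x)
    (hx1 : x ≤ 1) :
    ∑ k ∈ Finset.range (j + 1), j.choose k * (descPochhammer ℝ k).eval (α + j) *
        (descPochhammer ℝ (j - k)).eval (α + j) * (1 - x) ^ (j - k) * (1 + x) ^ k ≤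
      2 ^ j * (descPochhammer ℝ j).eval (α + j) * exp ((α + j) ^ 2 * (1 - x ^ 2) / (2 * α)) := by
  have hy : 0 ≤ 1 - x ^ 2 := by nlinarith
  set q := (α + j) ^ 2 * (1 - x ^ 2) / (2 * α)
  have hpj : 0 ≤ (descPochhammer ℝ j).eval (α + j) := descPochhammer_nonneg (by linarith)
  calc _ ≤ ∑ k ∈ Finset.range (j + 1),
        2 ^ j * (descPochhammer ℝ j).eval (α + j) * (q ^ (j - k) / (j - k).factorial) :=
        Finset.sum_le_sum fun k hk => choose_mul_descPochhammer_mul_le hα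
          (Nat.lt_succ_iff.mp (Finset.mem_range.mp hk)) hx0 hx1
    _ = 2 ^ j * (descPochhammer ℝ j).eval (α + j) *
        ∑ k ∈ Finset.range (j + 1), q ^ k / k.factorial := by
        rw [← Finset.mul_sum, ← Finset.sum_range_reflect (fun k => q ^ k / k.factorial)]
        simp only [add_tsub_cancel_right]
    _ ≤ 2 ^ j * (descPochhammer ℝ j).eval (α + j) * exp q := by
        gcongr
        exact Real.sum_le_exp_of_nonneg (by positivity) _

theorem abs_jacobiP_neg (j : ℕ) (α x : ℝ) : |jacobiP j α (-x)| = |jacobiP j α x| := by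
  have heven := iteratedDeriv_comp_neg j (fun t : ℝ => (1 - t ^ 2) ^ (α + j)) x
  simp only [neg_sq, smul_eq_mul] at heven
  rw [jacobiP, jacobiP, neg_sq, abs_mul, abs_mul (_ * _), heven, abs_mul (_ ^ j), abs_pow, abs_neg,
    abs_one, one_pow, one_mul]

theorem abs_jacobiP_le {α : ℝ} (hα : 0 < α) (j : ℕ) {x : ℝ} (hx : x ∈ Ioo (-1 : ℝ) 1) :
    |jacobiP j α x| ≤ Real.Gamma (α + j + 1) / (Real.Gamma (α + 1) * j.factorial) *
      exp ((α + j) ^ 2 * (1 - x ^ 2) / (2 * α)) := by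
  wlog hx0 : 0 ≤ x generalizing x
  · have := this (x := -x) ⟨by linarith [hx.2], by linarith [hx.1]⟩ (by linarith)
    rwa [abs_jacobiP_neg, neg_sq] at this
  have hy : 0 < 1 - x ^ 2 := by nlinarith [hx.2]
  have hGamma :
      Real.Gamma (α + j + 1) = (descPochhammer ℝ j).eval (α + j) * Real.Gamma (α + 1) := by
    rw [Real.Gamma_add_one_eq_descPochhammer_eval_mul (by linarith), add_sub_cancel_right]
  have hjac : |jacobiP j α x| = 1 / (2 ^ j * j.factorial) *
      ((1 - x ^ 2) ^ (-α) * |iteratedDeriv j (fun t : ℝ => (1 - t ^ 2) ^ (α + j)) x|) := by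
    rw [jacobiP, abs_mul, abs_mul, abs_div, abs_pow, abs_neg, abs_one, one_pow,
      abs_of_pos (rpow_pos_of_pos hy _), abs_of_pos (by positivity : (0 : ℝ) < 2 ^ j * j.factorial),
      mul_assoc]
  rw [hjac, hGamma, mul_comm (Real.Gamma _),
    mul_div_mul_right _ _ (Real.Gamma_pos_of_pos (by linarith)).ne']
  calc 1 / (2 ^ j * j.factorial) *
        ((1 - x ^ 2) ^ (-α) * |iteratedDeriv j (fun t : ℝ => (1 - t ^ 2) ^ (α + j)) x|)
      ≤ 1 / (2 ^ j * j.factorial) * (2 ^ j * (descPochhammer ℝ j).eval (α + j) *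
          exp ((α + j) ^ 2 * (1 - x ^ 2) / (2 * α))) := by
        refine mul_le_mul_of_nonneg_left ?_ (by positivity)
        exact (one_sub_sq_rpow_neg_mul_abs_iteratedDeriv_le (by linarith) j hx).trans
          (sum_choose_descPochhammer_mul_le hα j hx0 hx.2.le)
    _ = _ := by field_simp

theorem cConst_le {ℓ m : ℝ} (M : ℕ) (hM : (M : ℝ) = 2 * m) (hℓm : 0 < ℓ - m + 1 / 2)
    (hℓ : 0 ≤ ℓ) :
    cConst ℓ m ≤ √ℓ * ℓ ^ m * Real.Gamma (ℓ - m + 1 / 2) / (2 ^ m * Real.Gamma (ℓ + 1 / 2)) := by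
  have hΓ : 0 < Real.Gamma (ℓ - m + 1 / 2) := Real.Gamma_pos_of_pos hℓm
  have hshift := Real.Gamma_add_one_eq_descPochhammer_eval_mul (s := ℓ + m - 1 / 2) (n := M)
    (by rw [hM]; linarith)
  rw [hM, show ℓ + m - 1 / 2 + 1 = ℓ + m + 1 / 2 by ring,
    show ℓ + m - 1 / 2 - 2 * m + 1 = ℓ - m + 1 / 2 by ring] at hshift
  have hpair : (descPochhammer ℝ M).eval (ℓ + m - 1 / 2) ≤ (ℓ ^ m) ^ 2 := by
    refine (descPochhammer_eval_le_mean_pow (by rw [hM]; linarith)).trans_eq ?_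
    rw [← rpow_natCast, ← rpow_natCast, ← rpow_mul hℓ, hM]
    ring_nf
  have hsq : ℓ * Real.Gamma (ℓ - m + 1 / 2) * Real.Gamma (ℓ + m + 1 / 2) ≤
      (√ℓ * ℓ ^ m * Real.Gamma (ℓ - m + 1 / 2)) ^ 2 := by
    rw [hshift, mul_pow, mul_pow, sq_sqrt hℓ]
    have := mul_le_mul_of_nonneg_left hpair (by positivity : 0 ≤ ℓ * Real.Gamma (ℓ - m + 1 / 2) ^ 2)
    linarith
  unfold cConst
  gcongr
  exact (sqrt_le_sqrt hsq).trans_eq (sqrt_sq (by positivity))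

theorem abs_Yfun_le {ℓ m x : ℝ} (j M : ℕ) (hj : ℓ - m - 1 / 2 = j) (hM : (M : ℝ) = 2 * m)
    (hm : 0 < m) (hx : x ∈ Ioo (-1 : ℝ) 1) :
    |Yfun ℓ m x| ≤ √ℓ * ℓ ^ m / (2 ^ m * Real.Gamma (m + 1)) * (1 - x ^ 2) ^ (m / 2) *
      exp (ℓ ^ 2 * (1 - x ^ 2) / (2 * m)) := by
  have hj0 : (0 : ℝ) ≤ j := j.cast_nonneg
  have hy : 0 < 1 - x ^ 2 := by nlinarith [hx.1, hx.2]
  have hℓ : 0 < ℓ := by linarith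
  have hΓm : 0 < Real.Gamma (m + 1) := Real.Gamma_pos_of_pos (by linarith)
  have hΓa : 0 < Real.Gamma (ℓ - m + 1 / 2) := Real.Gamma_pos_of_pos (by linarith)
  have hΓℓ : 0 < Real.Gamma (ℓ + 1 / 2) := Real.Gamma_pos_of_pos (by linarith)
  have hcConst : 0 ≤ cConst ℓ m := by unfold cConst; positivity
  have hjac := abs_jacobiP_le hm j hx
  rw [show m + j + 1 = ℓ + 1 / 2 by linarith, ← Real.Gamma_nat_eq_factorial,
    show (j : ℝ) + 1 = ℓ - m + 1 / 2 by linarith] at hjac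
  have hexp : exp ((m + j) ^ 2 * (1 - x ^ 2) / (2 * m)) ≤ exp (ℓ ^ 2 * (1 - x ^ 2) / (2 * m)) := by
    gcongr; nlinarith
  rw [Yfun, show ⌊ℓ - m - 1 / 2⌋₊ = j by rw [hj, Nat.floor_natCast], abs_mul, abs_mul,
    abs_of_nonneg hcConst, abs_of_pos (rpow_pos_of_pos hy _), mul_right_comm]
  calc cConst ℓ m * |jacobiP j m x| * (1 - x ^ 2) ^ (m / 2)
      ≤ √ℓ * ℓ ^ m * Real.Gamma (ℓ - m + 1 / 2) / (2 ^ m * Real.Gamma (ℓ + 1 / 2)) *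
          (Real.Gamma (ℓ + 1 / 2) / (Real.Gamma (m + 1) * Real.Gamma (ℓ - m + 1 / 2)) *
            exp (ℓ ^ 2 * (1 - x ^ 2) / (2 * m))) * (1 - x ^ 2) ^ (m / 2) := by
        refine mul_le_mul_of_nonneg_right (mul_le_mul (cConst_le M hM (by linarith) (by linarith))
          (hjac.trans (by gcongr)) (abs_nonneg _) (by positivity)) (by positivity)
    _ = _ := by
        generalize Real.Gamma (ℓ - m + 1 / 2) = A at hΓa ⊢
        generalize Real.Gamma (ℓ + 1 / 2) = B at hΓℓ ⊢
        field_simp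

theorem exp_sq_mul_div_le_two_rpow {ℓ m y : ℝ} (hm : 0 < m) (hy : 0 ≤ y) (hℓ : 0 ≤ ℓ)
    (h : ℓ * √y ≤ m / (2 * exp 1)) : exp (ℓ ^ 2 * y / (2 * m)) ≤ 2 ^ m := by
  have hsq : ℓ ^ 2 * y ≤ (m / (2 * exp 1)) ^ 2 := by
    rw [← sq_sqrt hy, ← mul_pow]
    exact pow_le_pow_left₀ (by positivity) h 2
  have he : 1 ≤ exp 1 := one_le_exp zero_le_one
  have hlog : 1 ≤ 8 * log 2 * exp 1 ^ 2 := by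
    nlinarith [log_two_gt_d9, one_le_pow₀ (n := 2) he]
  rw [rpow_def_of_pos two_pos, exp_le_exp, div_le_iff₀ (by positivity)]
  refine hsq.trans ?_
  rw [div_pow, div_le_iff₀ (by positivity)]
  nlinarith [mul_le_mul_of_nonneg_right hlog (sq_nonneg m)]

theorem abs_Xtilde_le_sqrt_rpow {d : ℕ} {ℓ m x : ℝ} (j M : ℕ) (hj : ℓ - m - 1 / 2 = j)
    (hM : (M : ℝ) = 2 * m) (hm : 0 < m) (hx : x ∈ Ioo (-1 : ℝ) 1) :
    |Xtilde d ℓ m x| ≤ √ℓ * ℓ ^ m / (2 ^ m * Real.Gamma (m + 1)) *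
      √(1 - x ^ 2) ^ (m - ((d : ℝ) - 2) / 2) * exp (ℓ ^ 2 * (1 - x ^ 2) / (2 * m)) := by
  have hy : 0 < 1 - x ^ 2 := by nlinarith [hx.1, hx.2]
  have hsqrt : (1 - x ^ 2) ^ (-((d : ℝ) - 2) / 4) * (1 - x ^ 2) ^ (m / 2) =
      √(1 - x ^ 2) ^ (m - ((d : ℝ) - 2) / 2) := by
    rw [← rpow_add hy, sqrt_eq_rpow, ← rpow_mul hy.le]
    ring_nf
  rw [Xtilde, abs_mul, abs_of_pos (rpow_pos_of_pos hy _), ← hsqrt]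
  calc (1 - x ^ 2) ^ (-((d : ℝ) - 2) / 4) * |Yfun ℓ m x|
      ≤ (1 - x ^ 2) ^ (-((d : ℝ) - 2) / 4) * (√ℓ * ℓ ^ m / (2 ^ m * Real.Gamma (m + 1)) *
          (1 - x ^ 2) ^ (m / 2) * exp (ℓ ^ 2 * (1 - x ^ 2) / (2 * m))) := by
        gcongr; exact abs_Yfun_le j M hj hM hm hx
    _ = _ := by ring

theorem abs_Xtilde_le {d : ℕ} {ℓ m x : ℝ} (j M : ℕ) (hj : ℓ - m - 1 / 2 = j)
    (hM : (M : ℝ) = 2 * m) (hm : 0 < m) (hd : 2 ≤ d) (hdm : ((d : ℝ) - 2) / 2 ≤ m)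
    (hx : x ∈ Ioo (-1 : ℝ) 1) (hsx : √(1 - x ^ 2) ≤ bPt ℓ m / (2 * exp 1)) :
    |Xtilde d ℓ m x| ≤ (4 * exp 1) ^ (((d : ℝ) - 2) / 2) * 2 ^ (-m) * ℓ ^ (((d : ℝ) - 1) / 2) := by
  set E := ((d : ℝ) - 2) / 2 with hE
  set w := bPt ℓ m / (2 * exp 1)
  have hE0 : 0 ≤ E := div_nonneg (sub_nonneg.mpr (by exact_mod_cast hd)) zero_le_two
  have hℓ : 0 < ℓ := by linarith [j.cast_nonneg (α := ℝ)]
  have hm2 : 1 / 2 ≤ m := by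
    have : (1 : ℝ) ≤ M := by
      exact_mod_cast Nat.one_le_iff_ne_zero.mpr (by rintro rfl; simp at hM; linarith)
    linarith
  have hy : 0 ≤ 1 - x ^ 2 := by nlinarith [hx.1, hx.2]
  have hw0 : 0 < w := by unfold w bPt; positivity
  have hwℓ : w * ℓ = m / (2 * exp 1) := by unfold w bPt; field_simp
  have hpow : √(1 - x ^ 2) ^ (m - E) ≤ w ^ m * w ^ (-E) := by
    rw [← rpow_add hw0, ← sub_eq_add_neg]
    exact rpow_le_rpow (sqrt_nonneg _) hsx (by linarith)
  have hexp : exp (ℓ ^ 2 * (1 - x ^ 2) / (2 * m)) ≤ 2 ^ m := by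
    refine exp_sq_mul_div_le_two_rpow hm hy hℓ.le ?_
    rw [← hwℓ, mul_comm w]
    exact mul_le_mul_of_nonneg_left hsx hℓ.le
  have hGamma : (w * ℓ) ^ m * 2 ^ m ≤ Real.Gamma (m + 1) := by
    rw [← mul_rpow (by positivity) (by norm_num), hwℓ,
      show m / (2 * exp 1) * 2 = m / exp 1 by field_simp]
    exact Real.div_exp_one_rpow_le_Gamma_add_one hM
  have hwE : w ^ (-E) ≤ (4 * exp 1 * ℓ) ^ E := by
    rw [rpow_neg hw0.le, ← inv_rpow hw0.le]
    refine rpow_le_rpow (by positivity) ?_ hE0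
    rw [inv_le_iff_one_le_mul₀ hw0, show 4 * exp 1 * ℓ * w = 4 * exp 1 * (w * ℓ) by ring, hwℓ]
    field_simp
    linarith
  have hΓm : 0 < Real.Gamma (m + 1) := Real.Gamma_pos_of_pos (by linarith)
  calc |Xtilde d ℓ m x|
      ≤ √ℓ * ℓ ^ m / (2 ^ m * Real.Gamma (m + 1)) * (w ^ m * w ^ (-E)) * 2 ^ m := by
        refine (abs_Xtilde_le_sqrt_rpow j M hj hM hm hx).trans ?_
        gcongr
    _ = ((w * ℓ) ^ m * 2 ^ m) * w ^ (-E) * √ℓ / (2 ^ m * Real.Gamma (m + 1)) := by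
        rw [mul_rpow hw0.le hℓ.le]; ring
    _ ≤ Real.Gamma (m + 1) * (4 * exp 1 * ℓ) ^ E * √ℓ / (2 ^ m * Real.Gamma (m + 1)) := by
        gcongr
    _ = (4 * exp 1) ^ E * 2 ^ (-m) * ℓ ^ (((d : ℝ) - 1) / 2) := by
        rw [mul_rpow (by positivity) hℓ.le, rpow_neg zero_le_two,
          show ((d : ℝ) - 1) / 2 = E + 1 / 2 by rw [hE]; ring, rpow_add hℓ, ← sqrt_eq_rpow]
        field_simp

theorem exists_nat_of_memId {d : ℕ} {ℓ m : ℝ} (hd : 2 ≤ d) (h : memId d ℓ m) :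
    ∃ j M : ℕ, ℓ - m - 1 / 2 = j ∧ (M : ℝ) = 2 * m ∧ ((d : ℝ) - 2) / 2 ≤ m := by
  obtain ⟨⟨n₁, hℓ⟩, ⟨n₂, hm⟩, hmℓ⟩ := h
  rw [Nat.cast_sub (by omega : 1 ≤ d), Nat.cast_one] at hm
  have hn : n₂ ≤ n₁ := by
    have : (n₂ : ℝ) < n₁ + 1 := by linarith
    exact Nat.lt_succ_iff.mp (by exact_mod_cast this)
  refine ⟨n₁ - n₂, 2 * n₂ + (d - 2), ?_, ?_, ?_⟩
  · rw [Nat.cast_sub hn, hℓ, hm]; ring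
  · push_cast [Nat.cast_sub hd, hm]; ring
  · rw [hm]; linarith [n₂.cast_nonneg (α := ℝ)]

theorem stmt3_general (d : ℕ) (hd : 2 ≤ d) (ε : ℝ) :
    ∃ C : ℝ, 0 < C ∧ ∀ ℓ m : ℝ, memId d ℓ m → 0 < m → m ≤ ε * ℓ →
      ∀ x ∈ Set.Ioo (-1:ℝ) 1, Real.sqrt (1 - x ^ 2) ≤ bPt ℓ m / (2 * Real.exp 1) →
        |Xtilde d ℓ m x| ≤ C * (2 : ℝ) ^ (-m) * ℓ ^ (((d:ℝ) - 1) / 2) := by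
  refine ⟨(4 * exp 1) ^ (((d : ℝ) - 2) / 2), by positivity, ?_⟩
  intro ℓ m hmem hm _ x hx hsx
  obtain ⟨j, M, hj, hM, hdm⟩ := exists_nat_of_memId hd hmem
  exact abs_Xtilde_le j M hj hM hm hd hdm hx hsx

theorem stmt3 (d : ℕ) (hd : 2 ≤ d) (ε : ℝ) (hε : ε ∈ Set.Ioo (0:ℝ) 1) :
    ∃ C : ℝ, 0 < C ∧ ∀ ℓ m : ℝ, memId d ℓ m → 0 < m → m ≤ ε * ℓ →
      ∀ x ∈ Set.Ioo (-1:ℝ) 1, Real.sqrt (1 - x ^ 2) ≤ bPt ℓ m / (2 * Real.exp 1) →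
        |Xtilde d ℓ m x| ≤ C * (2 : ℝ) ^ (-m) * ℓ ^ (((d:ℝ) - 1) / 2) :=
  stmt3_general d hd ε
end

section
/- For all (ℓ,m) ∈ I, the function L_{ℓ,m}(x) = (1−x²)^{1/2} Y_{ℓ,m}(x) is twice differentiable on (−1,1) and satisfies the second-order ODE L_{ℓ,m}''(x) = Q_{ℓ,m}(x) L_{ℓ,m}(x) for all x ∈ (−1,1), where Q_{ℓ,m}(x) = (ℓ²(x² − a_{ℓ,m}²) − (3+x²)/4)/(1−x²)². -/
open Real Set

/-- `L_{ℓ,m}(x) = (1-x²)^{1/2} Y_{ℓ,m}(x)`. -/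
noncomputable def Lfun (ℓ m : ℝ) : ℝ → ℝ := fun x => Real.sqrt (1 - x ^ 2) * Yfun ℓ m x

/-- The potential `Q_{ℓ,m}`. -/
noncomputable def Qfun (ℓ m x : ℝ) : ℝ :=
  (ℓ ^ 2 * (x ^ 2 - aPt ℓ m ^ 2) - (3 + x ^ 2) / 4) / (1 - x ^ 2) ^ 2

/-!
Iterating `p ↦ (1 - X²) p' - 2c X p`, the `k`-th derivative of `(1 - t²)^β` is `(1 - t²)^(β-k)`
times a polynomial, so `L_{ℓ,m} = K (1 - x²)^((m+1)/2) P` with `P` the Rodrigues polynomial of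
degree `j = ℓ - m - 1/2`. The recursion together with `P_{k+1}' = -(k+1)(2β-k) P_k` shows that
`P` solves the Gegenbauer equation `(1 - x²) P'' - 2(m+1) x P' + j(j+2m+1) P = 0`. The weight
`(1 - x²)^((m+1)/2)` is exactly the Liouville transformation removing the first-order term of
this equation, which leaves `L'' = Q L`.
-/

open Polynomial

noncomputable def weightedPoly (c : ℝ) (p : ℝ[X]) (t : ℝ) : ℝ := (1 - t ^ 2) ^ c * p.eval t

noncomputable def weightDeriv (c : ℝ) (p : ℝ[X]) : ℝ[X] :=
  (1 - X ^ 2) * derivative p - C (2 * c) * X * p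

lemma hasDerivAt_weightedPoly (c : ℝ) (p : ℝ[X]) {x : ℝ} (hx : 0 < 1 - x ^ 2) :
    HasDerivAt (weightedPoly c p) (weightedPoly (c - 1) (weightDeriv c p) x) x := by
  have hw : HasDerivAt (fun t : ℝ => (1 - t ^ 2) ^ c) (-(2 * x * c * (1 - x ^ 2) ^ (c - 1))) x := by
    simpa using ((hasDerivAt_pow 2 x).const_sub 1).rpow_const (p := c) (Or.inl hx.ne')
  refine (hw.mul (p.hasDerivAt x)).congr_deriv ?_
  have hc : (1 - x ^ 2) ^ c = (1 - x ^ 2) ^ (c - 1) * (1 - x ^ 2) := by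
    rw [← rpow_add_one hx.ne', sub_add_cancel]
  simp only [weightedPoly, weightDeriv, hc, eval_sub, eval_mul, eval_one, eval_pow, eval_X, eval_C]
  ring

lemma Set.EqOn.deriv_weightedPoly {f : ℝ → ℝ} {c : ℝ} {p : ℝ[X]}
    (h : EqOn f (weightedPoly c p) (Ioo (-1) 1)) :
    EqOn (_root_.deriv f) (weightedPoly (c - 1) (weightDeriv c p)) (Ioo (-1) 1) := fun x hx => by
  rw [h.deriv isOpen_Ioo hx, (hasDerivAt_weightedPoly c p (by nlinarith [hx.1, hx.2])).deriv]

lemma Set.EqOn.differentiableAt_weightedPoly {f : ℝ → ℝ} {c : ℝ} {p : ℝ[X]}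
    (h : EqOn f (weightedPoly c p) (Ioo (-1) 1)) {x : ℝ} (hx : x ∈ Ioo (-1) 1) :
    DifferentiableAt ℝ f x :=
  ((h.eventuallyEq_of_mem (isOpen_Ioo.mem_nhds hx)).differentiableAt_iff).mpr
    (hasDerivAt_weightedPoly c p (by nlinarith [hx.1, hx.2])).differentiableAt

noncomputable def rodriguesPoly (β : ℝ) : ℕ → ℝ[X]
  | 0 => 1
  | k + 1 => weightDeriv (β - k) (rodriguesPoly β k)

lemma iteratedDeriv_one_sub_sq_rpow_s12 (β : ℝ) (k : ℕ) :
    EqOn (iteratedDeriv k fun t : ℝ => (1 - t ^ 2) ^ β)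
      (weightedPoly (β - k) (rodriguesPoly β k)) (Ioo (-1) 1) := by
  induction k with
  | zero => intro x _; simp [weightedPoly, rodriguesPoly]
  | succ k ih =>
    rw [iteratedDeriv_succ, Nat.cast_succ, ← sub_sub]
    exact Set.EqOn.deriv_weightedPoly ih

lemma derivative_rodriguesPoly_succ (β : ℝ) (k : ℕ) :
    derivative (rodriguesPoly β (k + 1)) = C (-(k + 1) * (2 * β - k)) * rodriguesPoly β k := by
  induction k with
  | zero => simp [rodriguesPoly, weightDeriv]
  | succ k ih =>
    have hk : rodriguesPoly β (k + 1) =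
        (1 - X ^ 2) * derivative (rodriguesPoly β k) - C (2 * (β - k)) * X * rodriguesPoly β k :=
      rfl
    rw [rodriguesPoly, weightDeriv]
    simp only [derivative_mul, derivative_sub, derivative_one, derivative_X_sq, derivative_C,
      derivative_X, ih]
    push_cast
    simp only [map_mul, map_add, map_sub, map_neg, map_one, map_natCast, map_ofNat] at hk ⊢
    linear_combination ((k + 1) * (2 * C β - k)) * hk

noncomputable def gegenbauerOp (m μ : ℝ) (p : ℝ[X]) : ℝ[X] :=
  (1 - X ^ 2) * derivative (derivative p) - C (2 * (m + 1)) * X * derivative p + C μ * p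

lemma gegenbauerOp_C_mul (m μ K : ℝ) (p : ℝ[X]) :
    gegenbauerOp m μ (C K * p) = C K * gegenbauerOp m μ p := by
  simp only [gegenbauerOp, derivative_C_mul]
  ring

lemma gegenbauerOp_rodriguesPoly (m : ℝ) (j : ℕ) :
    gegenbauerOp m (j * (j + 2 * m + 1)) (rodriguesPoly (m + j) j) = 0 := by
  cases j with
  | zero => simp [gegenbauerOp, rodriguesPoly]
  | succ k =>
    have hk : rodriguesPoly (m + (k + 1 : ℕ)) (k + 1) =
        (1 - X ^ 2) * derivative (rodriguesPoly (m + (k + 1 : ℕ)) k)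
          - C (2 * (m + (k + 1 : ℕ) - k)) * X * rodriguesPoly (m + (k + 1 : ℕ)) k :=
      rfl
    rw [gegenbauerOp, derivative_rodriguesPoly_succ, derivative_C_mul]
    push_cast at hk ⊢
    simp only [map_mul, map_add, map_sub, map_neg, map_one, map_natCast, map_ofNat] at hk ⊢
    linear_combination ((k + 1) * (2 * (C m + k + 1) - k)) * hk

lemma weightDeriv_weightDeriv_of_gegenbauerOp_eq_zero {m μ : ℝ} {p : ℝ[X]}
    (hp : gegenbauerOp m μ p = 0) :
    weightDeriv ((m + 1) / 2 - 1) (weightDeriv ((m + 1) / 2) p) =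
      (C (μ + m * (m + 1)) * X ^ 2 - C (μ + m + 1)) * p := by
  rw [weightDeriv, weightDeriv, show 2 * ((m + 1) / 2) = m + 1 by ring,
    show 2 * ((m + 1) / 2 - 1) = m - 1 by ring]
  simp only [gegenbauerOp, derivative_mul, derivative_one, derivative_X_sq, derivative_C,
    derivative_X, map_mul, map_add, map_sub, map_one, map_ofNat] at hp ⊢
  linear_combination (1 - X ^ 2) * hp

lemma Lfun_eqOn_weightedPoly (m : ℝ) (j : ℕ) :
    EqOn (Lfun (m + j + 1 / 2) m) (weightedPoly ((m + 1) / 2)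
      (C (cConst (m + j + 1 / 2) m * ((-1) ^ j / (2 ^ j * j.factorial))) * rodriguesPoly (m + j) j))
      (Ioo (-1) 1) := by
  intro y hy
  have hw : 0 < 1 - y ^ 2 := by nlinarith [hy.1, hy.2]
  have hj : ⌊m + j + 1 / 2 - m - 1 / 2⌋₊ = j := by
    rw [show m + j + 1 / 2 - m - 1 / 2 = (j : ℝ) by ring, Nat.floor_natCast]
  have hRodrigues := iteratedDeriv_one_sub_sq_rpow_s12 (m + j) j hy
  rw [add_sub_cancel_right] at hRodrigues
  have hpow : (1 - y ^ 2) ^ (1 / 2 : ℝ) * ((1 - y ^ 2) ^ (m / 2) * ((1 - y ^ 2) ^ (-m) *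
      (1 - y ^ 2) ^ m)) = (1 - y ^ 2) ^ ((m + 1) / 2) := by
    rw [← rpow_add hw, ← rpow_add hw, ← rpow_add hw]
    ring_nf
  simp only [Lfun, Yfun, jacobiP, hj, hRodrigues, weightedPoly, eval_mul,
    eval_C, sqrt_eq_rpow, ← hpow]
  ring

lemma sq_mul_aPt_sq {ℓ m : ℝ} (hℓ : ℓ ≠ 0) (hm : m ^ 2 ≤ ℓ ^ 2) :
    ℓ ^ 2 * aPt ℓ m ^ 2 = ℓ ^ 2 - m ^ 2 := by
  have hb : 0 ≤ 1 - bPt ℓ m ^ 2 := by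
    rw [bPt, div_pow, sub_nonneg]
    exact div_le_one_of_le₀ hm (sq_nonneg ℓ)
  rw [aPt, sq_sqrt hb, bPt]
  field_simp

theorem stmt12 (ℓ m : ℝ) (hI : memI ℓ m) :
    (∀ x ∈ Set.Ioo (-1:ℝ) 1, DifferentiableAt ℝ (Lfun ℓ m) x ∧
        DifferentiableAt ℝ (deriv (Lfun ℓ m)) x) ∧
    ∀ x ∈ Set.Ioo (-1:ℝ) 1,
      deriv (deriv (Lfun ℓ m)) x = Qfun ℓ m x * Lfun ℓ m x := by
  obtain ⟨⟨n, hn⟩, ⟨j, hj⟩⟩ := hI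
  have hm : 0 ≤ m := hn ▸ by positivity
  obtain rfl : ℓ = m + j + 1 / 2 := by linarith
  obtain ⟨K, hL⟩ : ∃ K, EqOn (Lfun (m + j + 1 / 2) m)
      (weightedPoly ((m + 1) / 2) (C K * rodriguesPoly (m + j) j)) (Ioo (-1) 1) :=
    ⟨_, Lfun_eqOn_weightedPoly m j⟩
  have hL' := hL.deriv_weightedPoly
  refine ⟨fun x hx => ⟨hL.differentiableAt_weightedPoly hx, hL'.differentiableAt_weightedPoly hx⟩,
    fun x hx => ?_⟩
  have hode : gegenbauerOp m (j * (j + 2 * m + 1)) (C K * rodriguesPoly (m + j) j) = 0 := by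
    rw [gegenbauerOp_C_mul, gegenbauerOp_rodriguesPoly, mul_zero]
  have hw : 0 < 1 - x ^ 2 := by nlinarith [hx.1, hx.2]
  have hpow :
      (1 - x ^ 2) ^ ((m + 1) / 2) = (1 - x ^ 2) ^ ((m + 1) / 2 - 1 - 1) * (1 - x ^ 2) ^ 2 := by
    rw [← rpow_add_natCast hw.ne']
    ring_nf
  rw [hL'.deriv_weightedPoly hx, weightDeriv_weightDeriv_of_gegenbauerOp_eq_zero hode, hL hx, Qfun,
    mul_sub, sq_mul_aPt_sq (by positivity) (by gcongr; linarith [j.cast_nonneg (α := ℝ)])]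
  simp only [weightedPoly, eval_mul, eval_sub, eval_C, eval_pow, eval_X, hpow]
  field_simp
  ring
end
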